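/- Let w > 0, R > 0, d₂ > 0, k > 0 and angles θ_i, θ_r with sin θ_i > 0 and sin θ_r > 0. Define b_x = sin² θ_i / w² − i (k/2)(sin² θ_i / R + sin² θ_r / d₂), b_y = 1/w² − i (k/2)(1/R + 1/d₂), Λ₁ = 2 d₂/(k w²), Λ₂ = d₂/R, W_x = (w sin θ_r / sin θ_i) · √((Λ₁ sin² θ_i / sin² θ_r)² + (Λ₂ sin² θ_i / sin² θ_r + 1)²) and W_y = w · √(Λ₁² + (Λ₂ + 1)²). Then W_y = 2 d₂ w |b_y| / k and W_x = 2 d₂ w |b_x| / (k sin θ_i sin θ_r); equivalently, k² Re(b_y) / (2 d₂² |b_y|²) = 2 / W_y² and k² sin² θ_r Re(b_x) / (2 d₂² |b_x|²) = 2 / W_x². -/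

import Mathlib

open Real

/-- Key algebraic identities of Appendix C (proof of Lemma 3), relating the complex
Gaussian-beam parameters `b_x`, `b_y` to the equivalent received beamwidths `W_x`, `W_y`. -/
private lemma sq_inj_nonneg {a b : ℝ} (ha : 0 ≤ a) (hb : 0 ≤ b) (h : a ^ 2 = b ^ 2) : a = b := by
  rw [← Real.sqrt_sq ha, h, Real.sqrt_sq hb]

set_option maxHeartbeats 1000000 in
theorem beamwidth_identities (w R d₂ k θi θr : ℝ) (bx by' : ℂ) (Λ₁ Λ₂ Wx Wy : ℝ)
    (hw : 0 < w) (hR : 0 < R) (hd₂ : 0 < d₂) (hk : 0 < k)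
    (hθi : 0 < Real.sin θi) (hθr : 0 < Real.sin θr)
    (hbx : bx = Complex.ofReal (Real.sin θi ^ 2 / w ^ 2)
      - Complex.I * Complex.ofReal (k / 2 * (Real.sin θi ^ 2 / R + Real.sin θr ^ 2 / d₂)))
    (hby : by' = Complex.ofReal (1 / w ^ 2) - Complex.I * Complex.ofReal (k / 2 * (1 / R + 1 / d₂)))
    (hΛ₁ : Λ₁ = 2 * d₂ / (k * w ^ 2)) (hΛ₂ : Λ₂ = d₂ / R)
    (hWx : Wx = w * Real.sin θr / Real.sin θi *
      Real.sqrt ((Λ₁ * Real.sin θi ^ 2 / Real.sin θr ^ 2) ^ 2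
        + (Λ₂ * Real.sin θi ^ 2 / Real.sin θr ^ 2 + 1) ^ 2))
    (hWy : Wy = w * Real.sqrt (Λ₁ ^ 2 + (Λ₂ + 1) ^ 2)) :
    Wy = 2 * d₂ * w * ‖by'‖ / k ∧
    Wx = 2 * d₂ * w * ‖bx‖ / (k * Real.sin θi * Real.sin θr) ∧
    k ^ 2 * by'.re / (2 * d₂ ^ 2 * ‖by'‖ ^ 2) = 2 / Wy ^ 2 ∧
    k ^ 2 * Real.sin θr ^ 2 * bx.re / (2 * d₂ ^ 2 * ‖bx‖ ^ 2) = 2 / Wx ^ 2 := by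
  set si := Real.sin θi
  set sr := Real.sin θr
  have hre_y : by'.re = 1 / w ^ 2 := by
    simp only [hby, Complex.sub_re, Complex.mul_re, Complex.I_re, Complex.I_im,
      Complex.ofReal_re, Complex.ofReal_im]; ring
  have him_y : by'.im = -(k / 2 * (1 / R + 1 / d₂)) := by
    simp only [hby, Complex.sub_im, Complex.mul_im, Complex.I_re, Complex.I_im,
      Complex.ofReal_re, Complex.ofReal_im]; ring
  have hre_x : bx.re = si ^ 2 / w ^ 2 := by
    simp only [hbx, Complex.sub_re, Complex.mul_re, Complex.I_re, Complex.I_im,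
      Complex.ofReal_re, Complex.ofReal_im]; ring
  have him_x : bx.im = -(k / 2 * (si ^ 2 / R + sr ^ 2 / d₂)) := by
    simp only [hbx, Complex.sub_im, Complex.mul_im, Complex.I_re, Complex.I_im,
      Complex.ofReal_re, Complex.ofReal_im]; ring
  have habs2y : ‖by'‖ ^ 2 = (1 / w ^ 2) ^ 2 + (k / 2 * (1 / R + 1 / d₂)) ^ 2 := by
    rw [Complex.sq_norm, Complex.normSq_apply, hre_y, him_y]; ring
  have habs2x : ‖bx‖ ^ 2
      = (si ^ 2 / w ^ 2) ^ 2 + (k / 2 * (si ^ 2 / R + sr ^ 2 / d₂)) ^ 2 := by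
    rw [Complex.sq_norm, Complex.normSq_apply, hre_x, him_x]; ring
  have habsy_pos : 0 < ‖by'‖ := by
    rcases eq_or_lt_of_le (norm_nonneg by') with h | h
    · exfalso
      have : ‖by'‖ ^ 2 = 0 := by rw [← h]; ring
      rw [habs2y] at this
      have h1 : (1 / w ^ 2) ^ 2 > 0 := by positivity
      nlinarith [sq_nonneg (k / 2 * (1 / R + 1 / d₂))]
    · exact h
  have habsx_pos : 0 < ‖bx‖ := by
    rcases eq_or_lt_of_le (norm_nonneg bx) with h | h
    · exfalso
      have : ‖bx‖ ^ 2 = 0 := by rw [← h]; ring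
      rw [habs2x] at this
      have h1 : (si ^ 2 / w ^ 2) ^ 2 > 0 := by positivity
      nlinarith [sq_nonneg (k / 2 * (si ^ 2 / R + sr ^ 2 / d₂))]
    · exact h
  have hSy : (0:ℝ) ≤ Λ₁ ^ 2 + (Λ₂ + 1) ^ 2 := by positivity
  have hSx : (0:ℝ) ≤ (Λ₁ * si ^ 2 / sr ^ 2) ^ 2 + (Λ₂ * si ^ 2 / sr ^ 2 + 1) ^ 2 := by positivity
  have hWy2 : Wy ^ 2 = w ^ 2 * (Λ₁ ^ 2 + (Λ₂ + 1) ^ 2) := by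
    rw [hWy, mul_pow, Real.sq_sqrt hSy]
  have hWx2 : Wx ^ 2 = (w * sr / si) ^ 2
      * ((Λ₁ * si ^ 2 / sr ^ 2) ^ 2 + (Λ₂ * si ^ 2 / sr ^ 2 + 1) ^ 2) := by
    rw [hWx, mul_pow, Real.sq_sqrt hSx]
  have hy2 : Wy ^ 2 = (2 * d₂ * w * ‖by'‖ / k) ^ 2 := by
    have hk' : k ≠ 0 := ne_of_gt hk
    have hw' : w ≠ 0 := ne_of_gt hw
    have hR' : R ≠ 0 := ne_of_gt hR
    have hd' : d₂ ≠ 0 := ne_of_gt hd₂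
    have hr : (2 * d₂ * w * ‖by'‖ / k) ^ 2
        = (2 * d₂ * w) ^ 2 * ‖by'‖ ^ 2 / k ^ 2 := by ring
    rw [hWy2, hr, habs2y, hΛ₁, hΛ₂]
    field_simp
  have hx2 : Wx ^ 2 = (2 * d₂ * w * ‖bx‖ / (k * si * sr)) ^ 2 := by
    have hk' : k ≠ 0 := ne_of_gt hk
    have hw' : w ≠ 0 := ne_of_gt hw
    have hR' : R ≠ 0 := ne_of_gt hR
    have hd' : d₂ ≠ 0 := ne_of_gt hd₂
    have hsi : si ≠ 0 := ne_of_gt hθi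
    have hsr : sr ≠ 0 := ne_of_gt hθr
    have hr : (2 * d₂ * w * ‖bx‖ / (k * si * sr)) ^ 2
        = (2 * d₂ * w) ^ 2 * ‖bx‖ ^ 2 / (k * si * sr) ^ 2 := by ring
    rw [hWx2, hr, habs2x, hΛ₁, hΛ₂]
    field_simp
  have hWy_nonneg : 0 ≤ Wy := by rw [hWy]; positivity
  have hWx_nonneg : 0 ≤ Wx := by
    rw [hWx]
    have : 0 ≤ w * sr / si := by positivity
    positivity
  have hRy : 0 ≤ 2 * d₂ * w * ‖by'‖ / k := by positivity
  have hRx : 0 ≤ 2 * d₂ * w * ‖bx‖ / (k * si * sr) := by positivity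
  have h1 : Wy = 2 * d₂ * w * ‖by'‖ / k := sq_inj_nonneg hWy_nonneg hRy hy2
  have h2 : Wx = 2 * d₂ * w * ‖bx‖ / (k * si * sr) :=
    sq_inj_nonneg hWx_nonneg hRx hx2
  refine ⟨h1, h2, ?_, ?_⟩
  · rw [hy2, hre_y]
    have hb2 : ‖by'‖ ^ 2 ≠ 0 := by positivity
    field_simp
  · rw [hx2, hre_x]
    have hb2 : ‖bx‖ ^ 2 ≠ 0 := by positivity
    field_simp
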